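/- In the auxiliary graph L(g, g_1, g_2), every set T of vertex-disjoint triangles covering {h_1^1, h_2^1, h_1^2, h_2^2, h_3^2, h_4^2} either covers all nine vertices of L or covers all vertices except g, g_1, g_2; moreover both alternatives are realized by some T. -/

import Mathlib

/-- `T` is a family of pairwise vertex-disjoint triangles of `G`. -/
def IsTriangleTiling {V : Type*} (G : SimpleGraph V) (T : Set (Finset V)) : Prop :=
  (∀ s ∈ T, s.card = 3 ∧ ∀ u ∈ s, ∀ v ∈ s, u ≠ v → G.Adj u v) ∧
  (∀ s ∈ T, ∀ s' ∈ T, s ≠ s' → ∀ v ∈ s, v ∉ s')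

/-- A family of triangles covers a vertex if some triangle of it contains that vertex. -/
def Covers {V : Type*} (T : Set (Finset V)) (v : V) : Prop :=
  ∃ s ∈ T, v ∈ s

/-- The auxiliary graph `L(g, g₁, g₂)`, with vertices labelled
`g = 0`, `g₁ = 1`, `g₂ = 2`, `h₁¹ = 3`, `h₂¹ = 4`, `h₁² = 5`, `h₂² = 6`, `h₃² = 7`,
`h₄² = 8` and the 14 edges of the splitter construction. -/
def gadgetL : SimpleGraph (Fin 9) :=
  SimpleGraph.fromRel fun x y =>
    (x = 0 ∧ y = 3) ∨ (x = 0 ∧ y = 4) ∨ (x = 3 ∧ y = 4) ∨ (x = 3 ∧ y = 5) ∨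
    (x = 3 ∧ y = 6) ∨ (x = 4 ∧ y = 7) ∨ (x = 4 ∧ y = 8) ∨ (x = 5 ∧ y = 6) ∨
    (x = 6 ∧ y = 7) ∨ (x = 7 ∧ y = 8) ∨ (x = 5 ∧ y = 1) ∨ (x = 6 ∧ y = 1) ∨
    (x = 7 ∧ y = 2) ∨ (x = 8 ∧ y = 2)

/-!
The graph `L` has exactly five triangles, `{0,3,4}`, `{3,5,6}`, `{4,7,8}`, `{1,5,6}` and
`{2,7,8}`, and two of them can both lie in a tiling only if they are not consecutive on the path
`{1,5,6} – {3,5,6} – {0,3,4} – {4,7,8} – {2,7,8}`. Covering `3, 4, 5, 7` demands a triangle from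
each consecutive pair, so either the middle triangle `{0,3,4}` is used, forcing the two ends, or
it is not, forcing its two neighbours. These are the two tilings of the theorem.
-/

namespace IsTriangleTiling

variable {V : Type*} {G : SimpleGraph V} {T : Set (Finset V)}

theorem isNClique (hT : IsTriangleTiling G T) {s : Finset V} (hs : s ∈ T) : G.IsNClique 3 s :=
  ⟨fun _ hu _ hv huv => (hT.1 s hs).2 _ hu _ hv huv, (hT.1 s hs).1⟩

theorem notMem_of_mem (hT : IsTriangleTiling G T) {s t : Finset V} (hs : s ∈ T) (hst : s ≠ t)
    {v : V} (hvs : v ∈ s) (hvt : v ∈ t) : t ∉ T :=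
  fun ht => hT.2 s hs t ht hst v hvs hvt

variable [Fintype V] [DecidableEq V] [DecidableRel G.Adj]

theorem mem_cliqueFinset (hT : IsTriangleTiling G T) {s : Finset V} (hs : s ∈ T) :
    s ∈ G.cliqueFinset 3 :=
  SimpleGraph.mem_cliqueFinset_iff.2 (hT.isNClique hs)

theorem covers_iff (hT : IsTriangleTiling G T) (v : V) :
    Covers T v ↔ ∃ s ∈ G.cliqueFinset 3, v ∈ s ∧ s ∈ T :=
  ⟨fun ⟨s, hs, hv⟩ => ⟨s, hT.mem_cliqueFinset hs, hv, hs⟩, fun ⟨s, _, hv, hs⟩ => ⟨s, hs, hv⟩⟩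

theorem eq_coe_of_forall_mem_iff (hT : IsTriangleTiling G T) {F : Finset (Finset V)}
    (hF : F ⊆ G.cliqueFinset 3) (h : ∀ s ∈ G.cliqueFinset 3, s ∈ T ↔ s ∈ F) : T = F := by
  ext s
  exact ⟨fun hs => (h s (hT.mem_cliqueFinset hs)).1 hs, fun hs => (h s (hF hs)).2 hs⟩

end IsTriangleTiling

theorem isTriangleTiling_coe {V : Type*} [Fintype V] [DecidableEq V] {G : SimpleGraph V}
    [DecidableRel G.Adj] {F : Finset (Finset V)} (hF : F ⊆ G.cliqueFinset 3)
    (hdisj : ∀ s ∈ F, ∀ t ∈ F, s ≠ t → Disjoint s t) : IsTriangleTiling G F := by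
  refine ⟨fun s hs => ?_, fun s hs t ht hst v hvs hvt => ?_⟩
  · obtain ⟨hcl, hcard⟩ := SimpleGraph.mem_cliqueFinset_iff.1 (hF hs)
    exact ⟨hcard, fun u hu v hv huv => hcl hu hv huv⟩
  · exact Finset.disjoint_left.1 (hdisj s hs t ht hst) hvs hvt

theorem covers_coe_iff {V : Type*} (F : Finset (Finset V)) (v : V) :
    Covers (F : Set (Finset V)) v ↔ ∃ s ∈ F, v ∈ s :=
  Iff.rfl

instance : DecidableRel gadgetL.Adj := fun a b =>
  decidable_of_iff' _ (SimpleGraph.fromRel_adj _ a b)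

set_option maxRecDepth 10000 in
theorem gadgetL_cliqueFinset_three :
    gadgetL.cliqueFinset 3 = {{0, 3, 4}, {3, 5, 6}, {4, 7, 8}, {1, 5, 6}, {2, 7, 8}} := by
  decide

def gadgetLFullTiling : Finset (Finset (Fin 9)) := {{0, 3, 4}, {1, 5, 6}, {2, 7, 8}}

def gadgetLInnerTiling : Finset (Finset (Fin 9)) := {{3, 5, 6}, {4, 7, 8}}

set_option maxRecDepth 4000 in
theorem isTriangleTiling_gadgetLFullTiling : IsTriangleTiling gadgetL gadgetLFullTiling :=
  isTriangleTiling_coe (by rw [gadgetL_cliqueFinset_three]; decide) (by decide)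

set_option maxRecDepth 4000 in
theorem isTriangleTiling_gadgetLInnerTiling : IsTriangleTiling gadgetL gadgetLInnerTiling :=
  isTriangleTiling_coe (by rw [gadgetL_cliqueFinset_three]; decide) (by decide)

theorem covers_gadgetLFullTiling (v : Fin 9) : Covers (gadgetLFullTiling : Set _) v := by
  rw [covers_coe_iff]
  revert v
  decide

theorem covers_gadgetLInnerTiling_iff (v : Fin 9) :
    Covers (gadgetLInnerTiling : Set _) v ↔ v ∉ ({0, 1, 2} : Set (Fin 9)) := by
  rw [covers_coe_iff]
  revert v
  decide

theorem eq_gadgetLFullTiling_or_eq_gadgetLInnerTiling {T : Set (Finset (Fin 9))}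
    (hT : IsTriangleTiling gadgetL T)
    (hcov : ∀ v : Fin 9, v ∉ ({0, 1, 2} : Set (Fin 9)) → Covers T v) :
    T = gadgetLFullTiling ∨ T = gadgetLInnerTiling := by
  have cover3 : {0, 3, 4} ∈ T ∨ {3, 5, 6} ∈ T := by
    simpa [hT.covers_iff, gadgetL_cliqueFinset_three] using hcov 3 (by decide)
  have cover4 : {0, 3, 4} ∈ T ∨ {4, 7, 8} ∈ T := by
    simpa [hT.covers_iff, gadgetL_cliqueFinset_three] using hcov 4 (by decide)
  have cover5 : {3, 5, 6} ∈ T ∨ {1, 5, 6} ∈ T := by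
    simpa [hT.covers_iff, gadgetL_cliqueFinset_three] using hcov 5 (by decide)
  have cover7 : {4, 7, 8} ∈ T ∨ {2, 7, 8} ∈ T := by
    simpa [hT.covers_iff, gadgetL_cliqueFinset_three] using hcov 7 (by decide)
  have not_356_of_034 (h : {0, 3, 4} ∈ T) : {3, 5, 6} ∉ T :=
    hT.notMem_of_mem h (by decide) (v := 3) (by decide) (by decide)
  have not_478_of_034 (h : {0, 3, 4} ∈ T) : {4, 7, 8} ∉ T :=
    hT.notMem_of_mem h (by decide) (v := 4) (by decide) (by decide)
  have not_356_of_156 (h : {1, 5, 6} ∈ T) : {3, 5, 6} ∉ T :=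
    hT.notMem_of_mem h (by decide) (v := 5) (by decide) (by decide)
  have not_478_of_278 (h : {2, 7, 8} ∈ T) : {4, 7, 8} ∉ T :=
    hT.notMem_of_mem h (by decide) (v := 7) (by decide) (by decide)
  by_cases hA : ({0, 3, 4} : Finset (Fin 9)) ∈ T
  · have hM1 := not_356_of_034 hA
    have hM2 := not_478_of_034 hA
    left
    refine hT.eq_coe_of_forall_mem_iff (by rw [gadgetL_cliqueFinset_three]; decide) ?_
    simp only [gadgetL_cliqueFinset_three, Finset.forall_mem_insert, Finset.mem_singleton,
      forall_eq]
    exact ⟨iff_of_true hA (by decide), iff_of_false hM1 (by decide),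
      iff_of_false hM2 (by decide), iff_of_true (cover5.resolve_left hM1) (by decide),
      iff_of_true (cover7.resolve_left hM2) (by decide)⟩
  · have hM1 := cover3.resolve_left hA
    have hM2 := cover4.resolve_left hA
    right
    refine hT.eq_coe_of_forall_mem_iff (by rw [gadgetL_cliqueFinset_three]; decide) ?_
    simp only [gadgetL_cliqueFinset_three, Finset.forall_mem_insert, Finset.mem_singleton,
      forall_eq]
    exact ⟨iff_of_false hA (by decide), iff_of_true hM1 (by decide),
      iff_of_true hM2 (by decide), iff_of_false (fun h => not_356_of_156 h hM1) (by decide),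
      iff_of_false (fun h => not_478_of_278 h hM2) (by decide)⟩

/-- In `L(g, g₁, g₂)`, every family `T` of vertex-disjoint triangles
covering `{h₁¹, h₂¹, h₁², h₂², h₃², h₄²}` either covers all nine vertices of `L` or covers
exactly the vertices other than `g, g₁, g₂`; moreover both alternatives are realized. -/
theorem gadgetL_tilings :
    (∀ T : Set (Finset (Fin 9)), IsTriangleTiling gadgetL T →
        (∀ v : Fin 9, v ∉ ({0, 1, 2} : Set (Fin 9)) → Covers T v) →
        ((∀ v : Fin 9, Covers T v) ∨
          (∀ v : Fin 9, Covers T v ↔ v ∉ ({0, 1, 2} : Set (Fin 9))))) ∧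
      (∃ T : Set (Finset (Fin 9)), IsTriangleTiling gadgetL T ∧
        ∀ v : Fin 9, Covers T v) ∧
      (∃ T : Set (Finset (Fin 9)), IsTriangleTiling gadgetL T ∧
        ∀ v : Fin 9, (Covers T v ↔ v ∉ ({0, 1, 2} : Set (Fin 9)))) := by
  refine ⟨fun T hT hcov => ?_,
    ⟨_, isTriangleTiling_gadgetLFullTiling, covers_gadgetLFullTiling⟩,
    ⟨_, isTriangleTiling_gadgetLInnerTiling, covers_gadgetLInnerTiling_iff⟩⟩
  rcases eq_gadgetLFullTiling_or_eq_gadgetLInnerTiling hT hcov with rfl | rfl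
  exacts [Or.inl covers_gadgetLFullTiling, Or.inr covers_gadgetLInnerTiling_iff]
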